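/- Let O be a commutative ring and n ≥ 1. For each i ∈ {1,…,n} let Gᵢ be a group, Cᵢ a Gᵢ-graded Gᵢ-acted O-algebra, Aᵢ and A'ᵢ Gᵢ-graded crossed products over Cᵢ, and M̃ᵢ a Gᵢ-graded (Aᵢ, A'ᵢ)-bimodule over Cᵢ. Then 𝐌̃ := M̃₁ ⊗_O … ⊗_O M̃ₙ is a 𝐆-graded (𝐀, 𝐀')-bimodule over 𝐂, where 𝐆 := G₁ × … × Gₙ, 𝐀 := A₁ ⊗ … ⊗ Aₙ, 𝐀' := A'₁ ⊗ … ⊗ A'ₙ and 𝐂 := C₁ ⊗ … ⊗ Cₙ; its (g₁,…,gₙ)-component is 𝐌̃_{(g₁,…,gₙ)} := M̃_{1,g₁} ⊗ … ⊗ M̃_{n,gₙ}, and for every g = (g₁,…,gₙ) ∈ 𝐆, every m̃ ∈ 𝐌̃_g and every c ∈ 𝐂 one has m̃ c = (^{g}c) m̃. -/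
import Mathlib


open scoped TensorProduct
open PiTensorProduct MulOpposite

/-- `𝒜` is a `G`-grading of the `O`-algebra `A`. -/
def IsAlgebraGrading (O : Type*) [CommRing O] {G : Type*} [Group G] {A : Type*}
    [Ring A] [Algebra O A] (𝒜 : G → Submodule O A) : Prop :=
  (1 : A) ∈ 𝒜 1 ∧
  (∀ ⦃g h : G⦄, ∀ a ∈ 𝒜 g, ∀ b ∈ 𝒜 h, a * b ∈ 𝒜 (g * h)) ∧
  (letI := Classical.decEq G; DirectSum.IsInternal 𝒜)

/-- `𝒜` is a `G`-graded crossed product structure on the `O`-algebra `A`. -/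
def IsCrossedProduct (O : Type*) [CommRing O] {G : Type*} [Group G] {A : Type*}
    [Ring A] [Algebra O A] (𝒜 : G → Submodule O A) : Prop :=
  IsAlgebraGrading O 𝒜 ∧ ∀ g : G, ∃ u : Aˣ, (u : A) ∈ 𝒜 g

/-- `(𝒞, φ)` is a `G`-graded `G`-acted structure on the `O`-algebra `C`. -/
def IsGradedActedAlgebra (O : Type*) [CommRing O] {G : Type*} [Group G] {C : Type*}
    [Ring C] [Algebra O C] (𝒞 : G → Submodule O C) (φ : G →* (C ≃ₐ[O] C)) : Prop :=
  IsAlgebraGrading O 𝒞 ∧ ∀ (g h : G), ∀ c ∈ 𝒞 h, φ g c ∈ 𝒞 (g * h * g⁻¹)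

/-- `ζ` makes the `G`-graded algebra `(A, 𝒜)` a graded algebra over `(C, 𝒞, φ)`. -/
def IsGradedAlgebraOver (O : Type*) [CommRing O] {G : Type*} [Group G]
    {A C : Type*} [Ring A] [Algebra O A] [Ring C] [Algebra O C]
    (𝒜 : G → Submodule O A) (𝒞 : G → Submodule O C) (φ : G →* (C ≃ₐ[O] C))
    (ζ : C →ₐ[O] A) : Prop :=
  (∀ (c : C), ∀ b ∈ 𝒜 1, ζ c * b = b * ζ c) ∧
  (∀ g : G, ∀ c ∈ 𝒞 g, ζ c ∈ 𝒜 g) ∧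
  (∀ (g : G) (u : Aˣ), (u : A) ∈ 𝒜 g → ∀ c : C, ζ (φ g c) = ↑u * ζ c * ↑u⁻¹)

/-- An `(A, A')`-bimodule structure on the `O`-module `M`, encoded by a pair of
`O`-algebra maps `l : A →ₐ[O] Module.End O M` (the left action) and
`r : A'ᵐᵒᵖ →ₐ[O] Module.End O M` (the right action) whose images commute. -/
def IsBimodule (O : Type*) [CommRing O] {A A' M : Type*} [Ring A] [Algebra O A]
    [Ring A'] [Algebra O A'] [AddCommGroup M] [Module O M]
    (l : A →ₐ[O] Module.End O M) (r : A'ᵐᵒᵖ →ₐ[O] Module.End O M) : Prop :=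
  ∀ (a : A) (a' : A'ᵐᵒᵖ) (m : M), l a (r a' m) = r a' (l a m)

/-- `(M, ℳ, l, r)` is a `G`-graded `(A, A')`-bimodule over `C`. -/
def IsGradedBimoduleOver (O : Type*) [CommRing O] {G : Type*} [Group G]
    {A A' C M : Type*} [Ring A] [Algebra O A] [Ring A'] [Algebra O A']
    [Ring C] [Algebra O C] [AddCommGroup M] [Module O M]
    (𝒜 : G → Submodule O A) (𝒜' : G → Submodule O A')
    (φ : G →* (C ≃ₐ[O] C)) (ζ : C →ₐ[O] A) (ζ' : C →ₐ[O] A')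
    (ℳ : G → Submodule O M)
    (l : A →ₐ[O] Module.End O M) (r : A'ᵐᵒᵖ →ₐ[O] Module.End O M) : Prop :=
  IsBimodule O l r ∧
  (letI := Classical.decEq G; DirectSum.IsInternal ℳ) ∧
  (∀ (g x h : G), ∀ a ∈ 𝒜 g, ∀ m ∈ ℳ x, ∀ a' ∈ 𝒜' h,
      l a (r (op a') m) ∈ ℳ (g * x * h)) ∧
  (∀ (g : G) (c : C), ∀ m ∈ ℳ g, r (op (ζ' c)) m = l (ζ (φ g c)) m)

/-- The componentwise grading on a tensor product of graded modules: the
`(g₁,…,gₙ)`-component is spanned by the pure tensors of homogeneous elements. -/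
def tensorGrading (O : Type*) [CommRing O] {n : ℕ} {G : Fin n → Type*}
    {M : Fin n → Type*} [∀ i, AddCommGroup (M i)] [∀ i, Module O (M i)]
    (ℳ : ∀ i, G i → Submodule O (M i)) (g : ∀ i, G i) : Submodule O (⨂[O] i, M i) :=
  Submodule.span O {x | ∃ m : ∀ i, M i, (∀ i, m i ∈ ℳ i (g i)) ∧ x = tprod O m}


section Aux

variable {O : Type*} [CommRing O]

/-- From an internal direct sum decomposition, extract the projection onto one component. -/
lemma exists_gradeProj {ι M : Type*} [AddCommGroup M] [Module O M]
    {ℳ : ι → Submodule O M}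
    (h : letI := Classical.decEq ι; DirectSum.IsInternal ℳ) (g : ι) :
    ∃ P : M →ₗ[O] M, (∀ x ∈ ℳ g, P x = x) ∧ (∀ h' ≠ g, ∀ x ∈ ℳ h', P x = 0) := by
  letI := Classical.decEq ι
  refine ⟨(ℳ g).subtype ∘ₗ (DirectSum.component O ι (fun i => ℳ i) g) ∘ₗ
      (LinearEquiv.ofBijective (DirectSum.coeLinearMap ℳ) h).symm.toLinearMap, ?_, ?_⟩
  · intro x hx
    have := h.ofBijective_coeLinearMap_of_mem hx
    simp only [LinearMap.coe_comp, Function.comp_apply, LinearEquiv.coe_coe,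
      Submodule.coe_subtype]
    rw [← DirectSum.apply_eq_component, this]
  · intro h' hne x hx
    have := h.ofBijective_coeLinearMap_of_ne hne ⟨x, hx⟩
    simp only [LinearMap.coe_comp, Function.comp_apply, LinearEquiv.coe_coe,
      Submodule.coe_subtype]
    rw [← DirectSum.apply_eq_component]
    erw [this]
    rfl

/-- Every element of an internally graded module is a finite sum of homogeneous elements. -/
lemma exists_finsupp_decomp {ι M : Type*} [AddCommGroup M] [Module O M]
    {ℳ : ι → Submodule O M}
    (h : letI := Classical.decEq ι; DirectSum.IsInternal ℳ) (x : M) :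
    ∃ f : ι →₀ M, (∀ g, f g ∈ ℳ g) ∧ x = ∑ g ∈ f.support, f g := by
  letI := Classical.decEq ι
  have hx : x ∈ iSup ℳ := by rw [h.submodule_iSup_eq_top]; trivial
  obtain ⟨f, hf, hsum⟩ := (Submodule.mem_iSup_iff_exists_finsupp ℳ x).mp hx
  exact ⟨f, hf, hsum.symm⟩

lemma mem_tensorGrading_of {n : ℕ} {G : Fin n → Type*} {M : Fin n → Type*}
    [∀ i, AddCommGroup (M i)] [∀ i, Module O (M i)]
    (ℳ : ∀ i, G i → Submodule O (M i)) (g : ∀ i, G i) (m : ∀ i, M i)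
    (hm : ∀ i, m i ∈ ℳ i (g i)) : tprod O m ∈ tensorGrading O ℳ g :=
  Submodule.subset_span ⟨m, hm, rfl⟩

/-- The componentwise grading on a tensor product of internally graded modules
is internal. -/
lemma tensorGrading_isInternal {n : ℕ} {G : Fin n → Type*} {M : Fin n → Type*}
    [∀ i, AddCommGroup (M i)] [∀ i, Module O (M i)]
    (ℳ : ∀ i, G i → Submodule O (M i))
    (h : ∀ i, letI := Classical.decEq (G i); DirectSum.IsInternal (ℳ i)) :
    letI := Classical.decEq (∀ i, G i); DirectSum.IsInternal (tensorGrading O ℳ) := by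
  letI := Classical.decEq (∀ i, G i)
  classical
  choose P hP1 hP2 using fun i => exists_gradeProj (h i)
  rw [DirectSum.isInternal_submodule_iff_iSupIndep_and_iSup_eq_top]
  constructor
  · rw [iSupIndep_def]
    intro g
    rw [Submodule.disjoint_def]
    intro x hxg hxo
    set π : (⨂[O] i, M i) →ₗ[O] ⨂[O] i, M i :=
      PiTensorProduct.map (fun i => P i (g i)) with hπ
    have hid : ∀ y ∈ tensorGrading O ℳ g, π y = y := by
      intro y hy
      refine Submodule.span_induction ?_ ?_ ?_ ?_ hy
      · rintro z ⟨m, hm, rfl⟩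
        rw [hπ, PiTensorProduct.map_tprod]
        congr 1
        funext i
        exact hP1 i (g i) _ (hm i)
      · simp
      · intro a b _ _ ha hb; rw [map_add, ha, hb]
      · intro c a _ ha; rw [map_smul, ha]
    have hkill : ∀ h', h' ≠ g → tensorGrading O ℳ h' ≤ LinearMap.ker π := by
      intro h' hne
      rw [tensorGrading, Submodule.span_le]
      rintro z ⟨m, hm, rfl⟩
      have hex : ∃ i, h' i ≠ g i := by
        by_contra hc
        push_neg at hc
        exact hne (funext hc)
      obtain ⟨i, hi⟩ := hex
      simp only [SetLike.mem_coe, LinearMap.mem_ker, hπ, PiTensorProduct.map_tprod]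
      exact MultilinearMap.map_coord_zero _ i (hP2 i (g i) (h' i) hi _ (hm i))
    have h1 : π x = x := hid x hxg
    have h2 : π x = 0 := by
      have hker : (⨆ (j) (_ : j ≠ g), tensorGrading O ℳ j) ≤ LinearMap.ker π :=
        iSup_le fun j => iSup_le fun hj => hkill j hj
      exact hker hxo
    rw [← h1, h2]
  · rw [eq_top_iff, ← PiTensorProduct.span_tprod_eq_top, Submodule.span_le]
    rintro z ⟨m, rfl⟩
    choose f hf hsum using fun i => exists_finsupp_decomp (h i) (m i)
    have hexp : tprod O m = ∑ p ∈ Fintype.piFinset (fun i => (f i).support),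
        PiTensorProduct.tprod O (fun i => f i (p i)) := by
      rw [← MultilinearMap.map_sum_finset (PiTensorProduct.tprod O) (fun i j => f i j)]
      congr 1
      funext i
      exact hsum i
    rw [SetLike.mem_coe, hexp]
    refine Submodule.sum_mem _ fun p _ => ?_
    exact Submodule.mem_iSup_of_mem p
      (mem_tensorGrading_of ℳ p _ (fun i => hf i (p i)))

end Aux

theorem stmt4 (O : Type*) [CommRing O] (n : ℕ) (hn : 1 ≤ n)
    (G : Fin n → Type*) [∀ i, Group (G i)]
    (A A' C M : Fin n → Type*)
    [∀ i, Ring (A i)] [∀ i, Algebra O (A i)]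
    [∀ i, Ring (A' i)] [∀ i, Algebra O (A' i)]
    [∀ i, Ring (C i)] [∀ i, Algebra O (C i)]
    [∀ i, AddCommGroup (M i)] [∀ i, Module O (M i)]
    (𝒜 : ∀ i, G i → Submodule O (A i)) (𝒜' : ∀ i, G i → Submodule O (A' i))
    (𝒞 : ∀ i, G i → Submodule O (C i)) (φ : ∀ i, G i →* (C i ≃ₐ[O] C i))
    (ζ : ∀ i, C i →ₐ[O] A i) (ζ' : ∀ i, C i →ₐ[O] A' i)
    (ℳ : ∀ i, G i → Submodule O (M i))
    (l : ∀ i, A i →ₐ[O] Module.End O (M i)) (r : ∀ i, (A' i)ᵐᵒᵖ →ₐ[O] Module.End O (M i))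
    (h𝒜 : ∀ i, IsCrossedProduct O (𝒜 i)) (h𝒜' : ∀ i, IsCrossedProduct O (𝒜' i))
    (h𝒞 : ∀ i, IsGradedActedAlgebra O (𝒞 i) (φ i))
    (hζ : ∀ i, IsGradedAlgebraOver O (𝒜 i) (𝒞 i) (φ i) (ζ i))
    (hζ' : ∀ i, IsGradedAlgebraOver O (𝒜' i) (𝒞 i) (φ i) (ζ' i))
    (hM : ∀ i, IsGradedBimoduleOver O (𝒜 i) (𝒜' i) (φ i) (ζ i) (ζ' i) (ℳ i) (l i) (r i))
    -- the componentwise action of `𝐆` on `𝐂` and the componentwise structure maps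
    (Φ : (∀ i, G i) →* ((⨂[O] i, C i) ≃ₐ[O] ⨂[O] i, C i))
    (hΦ : ∀ (g : ∀ i, G i) (c : ∀ i, C i),
      Φ g (tprod O c) = tprod O (fun i => φ i (g i) (c i)))
    (Z : (⨂[O] i, C i) →ₐ[O] (⨂[O] i, A i))
    (hZ : ∀ c : ∀ i, C i, Z (tprod O c) = tprod O (fun i => ζ i (c i)))
    (Z' : (⨂[O] i, C i) →ₐ[O] (⨂[O] i, A' i))
    (hZ' : ∀ c : ∀ i, C i, Z' (tprod O c) = tprod O (fun i => ζ' i (c i))) :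
    ∃ (L : (⨂[O] i, A i) →ₐ[O] Module.End O (⨂[O] i, M i))
      (R : (⨂[O] i, A' i)ᵐᵒᵖ →ₐ[O] Module.End O (⨂[O] i, M i)),
      (∀ (a : ∀ i, A i) (m : ∀ i, M i),
        L (tprod O a) (tprod O m) = tprod O (fun i => l i (a i) (m i))) ∧
      (∀ (a' : ∀ i, A' i) (m : ∀ i, M i),
        R (op (tprod O a')) (tprod O m) = tprod O (fun i => r i (op (a' i)) (m i))) ∧
      IsGradedBimoduleOver O (tensorGrading O 𝒜) (tensorGrading O 𝒜') Φ Z Z'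
        (tensorGrading O ℳ) L R := by

  classical
  -- the left action
  let fL : MultilinearMap O A (Module.End O (⨂[O] i, M i)) :=
    (PiTensorProduct.mapMultilinear O M M).compLinearMap (fun i => (l i).toLinearMap)
  have fL_apply : ∀ a : ∀ i, A i,
      fL a = PiTensorProduct.map (fun i => l i (a i)) := fun a => rfl
  have fLone : fL 1 = 1 := by
    rw [fL_apply]
    have : (fun i => l i ((1 : ∀ i, A i) i)) = fun i => (1 : Module.End O (M i)) := by
      funext i; exact map_one (l i)
    rw [this]
    exact PiTensorProduct.map_one
  have fLmul : ∀ x y, fL (x * y) = fL x * fL y := by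
    intro x y
    rw [fL_apply, fL_apply, fL_apply]
    have : (fun i => l i ((x * y) i))
        = fun i => (l i (x i)) * (l i (y i)) := by
      funext i; exact map_mul (l i) _ _
    rw [this]
    exact PiTensorProduct.map_mul _ _
  let L : (⨂[O] i, A i) →ₐ[O] Module.End O (⨂[O] i, M i) :=
    PiTensorProduct.liftAlgHom fL fLone fLmul
  have hL : ∀ (a : ∀ i, A i) (m : ∀ i, M i),
      L (tprod O a) (tprod O m) = tprod O (fun i => l i (a i) (m i)) := by
    intro a m
    show PiTensorProduct.lift fL (tprod O a) (tprod O m) = _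
    rw [PiTensorProduct.lift.tprod, fL_apply, PiTensorProduct.map_tprod]
  -- the right action
  let fR : MultilinearMap O A' ((Module.End O (⨂[O] i, M i))ᵐᵒᵖ) :=
    (opLinearEquiv O (M := Module.End O (⨂[O] i, M i))).toLinearMap.compMultilinearMap
      ((PiTensorProduct.mapMultilinear O M M).compLinearMap
        (fun i => (r i).toLinearMap ∘ₗ (opLinearEquiv O (M := A' i)).toLinearMap))
  have fR_apply : ∀ a' : ∀ i, A' i,
      fR a' = op (PiTensorProduct.map (fun i => r i (op (a' i)))) := fun a' => rfl
  have fRone : fR 1 = 1 := by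
    rw [fR_apply]
    have : (fun i => r i (op ((1 : ∀ i, A' i) i))) = fun i => (1 : Module.End O (M i)) := by
      funext i; exact map_one (r i)
    rw [this, PiTensorProduct.map_one]
    rfl
  have fRmul : ∀ x y, fR (x * y) = fR x * fR y := by
    intro x y
    rw [fR_apply, fR_apply, fR_apply]
    have : (fun i => r i (op ((x * y) i)))
        = fun i => (r i (op (y i))) * (r i (op (x i))) := by
      funext i
      rw [show op ((x * y) i) = op (y i) * op (x i) from rfl]
      exact map_mul (r i) _ _
    rw [this, PiTensorProduct.map_mul]
    rfl
  let S : (⨂[O] i, A' i) →ₐ[O] (Module.End O (⨂[O] i, M i))ᵐᵒᵖ :=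
    PiTensorProduct.liftAlgHom fR fRone fRmul
  let R : (⨂[O] i, A' i)ᵐᵒᵖ →ₐ[O] Module.End O (⨂[O] i, M i) := AlgHom.opComm S
  have hRS : ∀ x : ⨂[O] i, A' i, R (op x) = unop (S x) := fun x => rfl
  have hR : ∀ (a' : ∀ i, A' i) (m : ∀ i, M i),
      R (op (tprod O a')) (tprod O m) = tprod O (fun i => r i (op (a' i)) (m i)) := by
    intro a' m
    rw [hRS]
    show unop (PiTensorProduct.lift fR (tprod O a')) (tprod O m) = _
    rw [PiTensorProduct.lift.tprod, fR_apply, unop_op, PiTensorProduct.map_tprod]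
  refine ⟨L, R, hL, hR, ?_, ?_, ?_, ?_⟩
  -- (1) the two actions commute
  · intro a a' m
    induction a' using MulOpposite.rec' with
    | h b =>
    induction b using PiTensorProduct.induction_on with
    | smul_tprod cb b =>
      induction a using PiTensorProduct.induction_on with
      | smul_tprod ca a =>
        induction m using PiTensorProduct.induction_on with
        | smul_tprod cm m =>
          simp only [op_smul, map_smul, LinearMap.smul_apply, hL, hR]
          have heq : (fun i => l i (a i) (r i (op (b i)) (m i)))
              = fun i => r i (op (b i)) (l i (a i) (m i)) :=
            funext fun i => (hM i).1 (a i) (op (b i)) (m i)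
          rw [heq, smul_comm cb ca]
        | add x y hx hy =>
          simp only [map_add, hx, hy]
      | add x y hx hy =>
        simp only [map_add, LinearMap.add_apply, hx, hy]
    | add x y hx hy =>
      simp only [op_add, map_add, LinearMap.add_apply, hx, hy]
  -- (2) internality of the grading
  · exact tensorGrading_isInternal ℳ (fun i => (hM i).2.1)
  -- (3) compatibility with the gradings
  · intro g x h a ha m hm a' ha'
    induction ha using Submodule.span_induction with
    | mem a hagen =>
      obtain ⟨aa, haa, rfl⟩ := hagen
      induction hm using Submodule.span_induction with
      | mem m hmgen =>
        obtain ⟨mm, hmm, rfl⟩ := hmgen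
        induction ha' using Submodule.span_induction with
        | mem a' hagen' =>
          obtain ⟨aa', haa', rfl⟩ := hagen'
          rw [hR, hL]
          exact mem_tensorGrading_of ℳ _ _
            (fun i => (hM i).2.2.1 (g i) (x i) (h i) _ (haa i) _ (hmm i) _ (haa' i))
        | zero => simp only [op_zero, map_zero, LinearMap.zero_apply]; exact Submodule.zero_mem _
        | add u v _ _ hu hv =>
          rw [op_add, map_add, LinearMap.add_apply, map_add]
          exact Submodule.add_mem _ hu hv
        | smul c u _ hu =>
          rw [op_smul, map_smul, LinearMap.smul_apply, map_smul]
          exact Submodule.smul_mem _ _ hu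
      | zero => simp only [map_zero]; exact Submodule.zero_mem _
      | add u v _ _ hu hv =>
        rw [map_add, map_add]
        exact Submodule.add_mem _ hu hv
      | smul c u _ hu =>
        rw [map_smul, map_smul]
        exact Submodule.smul_mem _ _ hu
    | zero => simp only [map_zero, LinearMap.zero_apply]; exact Submodule.zero_mem _
    | add u v _ _ hu hv =>
      rw [map_add, LinearMap.add_apply]
      exact Submodule.add_mem _ hu hv
    | smul c u _ hu =>
      rw [map_smul, LinearMap.smul_apply]
      exact Submodule.smul_mem _ _ hu
  -- (4) compatibility with the structure maps
  · intro g c m hm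
    induction hm using Submodule.span_induction generalizing c with
    | mem m hmgen =>
      obtain ⟨mm, hmm, rfl⟩ := hmgen
      have hpure : ∀ cc : ∀ i, C i,
          R (op (Z' (tprod O cc))) (tprod O mm) = L (Z (Φ g (tprod O cc))) (tprod O mm) := by
        intro cc
        rw [hZ', hR, hΦ g cc, hZ, hL]
        congr 1
        funext i
        exact (hM i).2.2.2 (g i) (cc i) (mm i) (hmm i)
      induction c using PiTensorProduct.induction_on with
      | smul_tprod cc c =>
        rw [map_smul, map_smul, map_smul, op_smul, map_smul, map_smul,
          LinearMap.smul_apply, LinearMap.smul_apply, hpure]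
      | add u v hu hv =>
        rw [map_add, map_add, map_add, op_add, map_add, map_add,
          LinearMap.add_apply, LinearMap.add_apply, hu, hv]
    | zero => simp only [map_zero]
    | add u v _ _ hu hv => simp only [map_add, hu, hv]
    | smul cc u _ hu => simp only [map_smul, hu]
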